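/- arXiv:2412.15615 — 3 statements merged into one kernel-verified Lean document; each statement's English description precedes it below -/
import Mathlib

section
/- If a POVM set 𝕄_{A|X} is compatible and a POVM set ℕ_{B|Y} satisfies ℕ_{B|Y} ⪯ 𝕄_{A|X}, then ℕ_{B|Y} is compatible; in other words, measurement compatibility is closed under classical pre- and post-processing (simulability) of POVM sets. -/
open scoped BigOperators ComplexOrder

noncomputable section

namespace MultiObject

abbrev Mat (d : ℕ) := Matrix (Fin d) (Fin d) ℂ

/-- A quantum state: positive semidefinite with unit trace. -/
def IsState {d : ℕ} (ρ : Mat d) : Prop := ρ.PosSemidef ∧ ρ.trace = 1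

/-- A POVM set `M x a` indexed by input `x : Fin κ` and outcome `a : Fin l`. -/
def IsPOVMSet {d l κ : ℕ} (M : Fin κ → Fin l → Mat d) : Prop :=
  (∀ x a, (M x a).PosSemidef) ∧ (∀ x, ∑ a, M x a = 1)

/-- A probability mass function on a finite type. -/
def IsPMF {n : ℕ} (p : Fin n → ℝ) : Prop := (∀ i, 0 ≤ p i) ∧ ∑ i, p i = 1

/-- Simulability of the POVM set `N` by the POVM set `M` via classical
pre- and post-processing. -/
def Simulable {d l κ m τ : ℕ} (N : Fin τ → Fin m → Mat d)
    (M : Fin κ → Fin l → Mat d) : Prop :=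
  ∃ (nz : ℕ) (q : Fin nz → ℝ) (r : Fin τ → Fin nz → Fin κ → ℝ)
    (s : Fin τ → Fin nz → Fin l → Fin m → ℝ),
    IsPMF q ∧ (∀ y z, IsPMF (r y z)) ∧ (∀ y z a, IsPMF (s y z a)) ∧
    ∀ y b, N y b = ∑ z, ∑ x, ∑ a, (q z * r y z x * s y z a b) • M x a

/-- Compatibility (joint measurability) of a POVM set. -/
def Compatible {d l κ : ℕ} (M : Fin κ → Fin l → Mat d) : Prop :=
  ∃ (nl : ℕ) (G : Fin nl → Mat d) (pc : Fin κ → Fin nl → Fin l → ℝ),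
    (∀ i, (G i).PosSemidef) ∧ (∑ i, G i = 1) ∧ (∀ x lam, IsPMF (pc x lam)) ∧
    ∀ x a, M x a = ∑ lam, pc x lam a • G lam

/-- A subchannel: positive and trace-nonincreasing on PSD matrices. -/
def IsSubchannel {d : ℕ} (φ : Mat d →ₗ[ℂ] Mat d) : Prop :=
  (∀ A : Mat d, A.PosSemidef → (φ A).PosSemidef) ∧
  (∀ A : Mat d, A.PosSemidef → ((φ A).trace).re ≤ (A.trace).re)

/-- An instrument: subchannels summing to a trace-preserving map. -/
def IsInstrument {d m : ℕ} (Φ : Fin m → (Mat d →ₗ[ℂ] Mat d)) : Prop :=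
  (∀ b, IsSubchannel (Φ b)) ∧ (∀ A : Mat d, Matrix.trace (∑ b, Φ b A) = Matrix.trace A)

/-- A multi-object subchannel game: a PMF `p` with positive weights and a
family of instruments with common outcome set. -/
def IsGame {d m τ : ℕ} (p : Fin τ → ℝ) (Φ : Fin τ → Fin m → (Mat d →ₗ[ℂ] Mat d)) : Prop :=
  IsPMF p ∧ (∀ y, 0 < p y) ∧ (∀ y, IsInstrument (Φ y))

/-- The value `∑_{b,y} tr[N_{b|y} φ_{b|y}(ρ)] p(y)`. -/
def gameValue {d m τ : ℕ} (p : Fin τ → ℝ) (Φ : Fin τ → Fin m → (Mat d →ₗ[ℂ] Mat d))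
    (ρ : Mat d) (N : Fin τ → Fin m → Mat d) : ℝ :=
  ∑ y, ∑ b, p y * (Matrix.trace (N y b * Φ y b ρ)).re

/-- Success probability for discrimination. -/
def PsuccD {d l κ m τ : ℕ} (p : Fin τ → ℝ) (Φ : Fin τ → Fin m → (Mat d →ₗ[ℂ] Mat d))
    (ρ : Mat d) (M : Fin κ → Fin l → Mat d) : ℝ :=
  sSup {v : ℝ | ∃ N : Fin τ → Fin m → Mat d, Simulable N M ∧ v = gameValue p Φ ρ N}

/-- Error probability for exclusion. -/
def PerrE {d l κ m τ : ℕ} (p : Fin τ → ℝ) (Φ : Fin τ → Fin m → (Mat d →ₗ[ℂ] Mat d))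
    (ρ : Mat d) (M : Fin κ → Fin l → Mat d) : ℝ :=
  sInf {v : ℝ | ∃ N : Fin τ → Fin m → Mat d, Simulable N M ∧ v = gameValue p Φ ρ N}

/-- Free (normalised) states of a cone `𝓕`. -/
def freeStates {d : ℕ} (𝓕 : Set (Mat d)) : Set (Mat d) := {σ ∈ 𝓕 | Matrix.trace σ = 1}

/-- Feasible set for the generalised robustness of a state. -/
def RFSet {d : ℕ} (F : Set (Mat d)) (ρ : Mat d) : Set ℝ :=
  {r : ℝ | 0 ≤ r ∧ ∃ ρG σ : Mat d, IsState ρG ∧ σ ∈ F ∧ ρ + r • ρG = (1 + r) • σ}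

/-- Generalised robustness of a state. -/
def RF {d : ℕ} (F : Set (Mat d)) (ρ : Mat d) : ℝ := sInf (RFSet F ρ)

/-- Feasible set for the weight of resource of a state. -/
def WFSet {d : ℕ} (F : Set (Mat d)) (ρ : Mat d) : Set ℝ :=
  {w : ℝ | 0 ≤ w ∧ w ≤ 1 ∧ ∃ ρG σ : Mat d, IsState ρG ∧ σ ∈ F ∧ ρ = w • ρG + (1 - w) • σ}

/-- Weight of resource of a state. -/
def WF {d : ℕ} (F : Set (Mat d)) (ρ : Mat d) : ℝ := sInf (WFSet F ρ)

/-- Feasible set for the generalised robustness of a POVM set. -/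
def RFMSet {d l κ : ℕ} (𝔽 : Set (Fin κ → Fin l → Mat d))
    (M : Fin κ → Fin l → Mat d) : Set ℝ :=
  {r : ℝ | 0 ≤ r ∧ ∃ G Ff : Fin κ → Fin l → Mat d, IsPOVMSet G ∧ Ff ∈ 𝔽 ∧
     ∀ x a, M x a + r • G x a = (1 + r) • Ff x a}

/-- Generalised robustness of a POVM set. -/
def RFM {d l κ : ℕ} (𝔽 : Set (Fin κ → Fin l → Mat d)) (M : Fin κ → Fin l → Mat d) : ℝ :=
  sInf (RFMSet 𝔽 M)

/-- Feasible set for the weight of resource of a POVM set. -/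
def WFMSet {d l κ : ℕ} (𝔽 : Set (Fin κ → Fin l → Mat d))
    (M : Fin κ → Fin l → Mat d) : Set ℝ :=
  {w : ℝ | 0 ≤ w ∧ w ≤ 1 ∧ ∃ G Ff : Fin κ → Fin l → Mat d, IsPOVMSet G ∧ Ff ∈ 𝔽 ∧
     ∀ x a, M x a = w • G x a + (1 - w) • Ff x a}

/-- Weight of resource of a POVM set. -/
def WFM {d l κ : ℕ} (𝔽 : Set (Fin κ → Fin l → Mat d)) (M : Fin κ → Fin l → Mat d) : ℝ :=
  sInf (WFMSet 𝔽 M)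

/-- Conic hull of a set in a real module. -/
def conicHull {α : Type*} [AddCommMonoid α] [Module ℝ α] (S : Set α) : Set α :=
  {A | ∃ (n : ℕ) (c : Fin n → ℝ) (f : Fin n → α),
    (∀ i, 0 ≤ c i) ∧ (∀ i, f i ∈ S) ∧ A = ∑ i, c i • f i}

/-- `𝓕` is a closed convex cone of PSD matrices with at least one free state. -/
def IsFreeStateCone {d : ℕ} (𝓕 : Set (Mat d)) : Prop :=
  (∀ A ∈ 𝓕, Matrix.PosSemidef A) ∧
  (∀ A ∈ 𝓕, ∀ c : ℝ, 0 ≤ c → c • A ∈ 𝓕) ∧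
  (∀ A ∈ 𝓕, ∀ B ∈ 𝓕, A + B ∈ 𝓕) ∧
  IsClosed 𝓕 ∧ (freeStates 𝓕).Nonempty

/-- `𝔽` is a set of POVM sets whose conic hull is closed. -/
def GoodPOVMFree {d l κ : ℕ} (𝔽 : Set (Fin κ → Fin l → Mat d)) : Prop :=
  (∀ M ∈ 𝔽, IsPOVMSet M) ∧ IsClosed (conicHull 𝔽)

/-- The collection `𝔽` of free POVM sets is closed under simulability. -/
def ClosedUnderSim {d : ℕ} (𝔽 : ∀ l κ : ℕ, Set (Fin κ → Fin l → Mat d)) : Prop :=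
  ∀ {l κ m τ : ℕ} (M : Fin κ → Fin l → Mat d) (N : Fin τ → Fin m → Mat d),
    M ∈ 𝔽 l κ → Simulable N M → N ∈ 𝔽 m τ

/-- Best fully free success probability. -/
def Dbest {d l κ m τ : ℕ} (p : Fin τ → ℝ) (Φ : Fin τ → Fin m → (Mat d →ₗ[ℂ] Mat d))
    (F : Set (Mat d)) (𝔽 : Set (Fin κ → Fin l → Mat d)) : ℝ :=
  sSup {v : ℝ | ∃ (σ : Mat d) (N : Fin κ → Fin l → Mat d),
    σ ∈ F ∧ N ∈ 𝔽 ∧ v = PsuccD p Φ σ N}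

/-- Best fully free error probability. -/
def Ebest {d l κ m τ : ℕ} (p : Fin τ → ℝ) (Φ : Fin τ → Fin m → (Mat d →ₗ[ℂ] Mat d))
    (F : Set (Mat d)) (𝔽 : Set (Fin κ → Fin l → Mat d)) : ℝ :=
  sInf {v : ℝ | ∃ (σ : Mat d) (N : Fin κ → Fin l → Mat d),
    σ ∈ F ∧ N ∈ 𝔽 ∧ v = PerrE p Φ σ N}

/-- Operator norm of a PSD matrix via the variational characterisation
`‖Z‖_op = sup_{η state} tr[Z η]`. -/
def opNormPSD {d : ℕ} (Z : Mat d) : ℝ :=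
  sSup {v : ℝ | ∃ η : Mat d, IsState η ∧ v = (Matrix.trace (Z * η)).re}

/-- The linear map `η ↦ tr[Z η] • χ`. -/
def funMap {d : ℕ} (Z χ : Mat d) : Mat d →ₗ[ℂ] Mat d where
  toFun η := Matrix.trace (Z * η) • χ
  map_add' η₁ η₂ := by
    simp [Matrix.mul_add, add_smul]
  map_smul' c η := by
    simp [Matrix.mul_smul, smul_smul]

/-- The coefficient `α = 1/(‖Z^ρ‖_op ∑_{a,x} tr[Z_{a|x}] p(x)⁻¹)`. -/
def alphaConst {d l κ : ℕ} (Zr : Mat d) (Zm : Fin κ → Fin l → Mat d)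
    (p : Fin κ → ℝ) : ℝ :=
  (opNormPSD Zr * ∑ x, ∑ a, (Matrix.trace (Zm x a)).re / p x)⁻¹

/-- The function `F_y(η) = α tr[Z^ρ η] ∑_a tr[Z_{a|y}] p(y)⁻¹`. -/
def FyD {d l κ : ℕ} (Zr : Mat d) (Zm : Fin κ → Fin l → Mat d) (p : Fin κ → ℝ)
    (y : Fin κ) (η : Mat d) : ℝ :=
  alphaConst Zr Zm p * (Matrix.trace (Zr * η)).re * (∑ a, (Matrix.trace (Zm y a)).re) / p y

/-- The discrimination game built from dual-feasible operators. -/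
def discPsi {d l κ : ℕ} (Zr : Mat d) (Zm : Fin κ → Fin l → Mat d) (p : Fin κ → ℝ)
    (J : ℕ) (χ : Mat d) : Fin κ → Fin (l + J) → (Mat d →ₗ[ℂ] Mat d) :=
  fun y b =>
    if h : (b : ℕ) < l then
      (((alphaConst Zr Zm p) / p y : ℝ) : ℂ) • funMap Zr (Zm y ⟨b, h⟩)
    else
      ((J : ℂ))⁻¹ • (funMap 1 χ -
        (((alphaConst Zr Zm p) * (∑ a, (Matrix.trace (Zm y a)).re) / p y : ℝ) : ℂ) •
          funMap Zr χ)

/-- The coefficient `β = 1/(2‖Y^ρ‖_op ∑_{a,x} tr[Y_{a|x}] p(x)⁻¹)`. -/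
def betaConst {d l κ : ℕ} (Yr : Mat d) (Ym : Fin κ → Fin l → Mat d)
    (p : Fin κ → ℝ) : ℝ :=
  (2 * opNormPSD Yr * ∑ x, ∑ a, (Matrix.trace (Ym x a)).re / p x)⁻¹

/-- The function `G_y(η) = β tr[Y^ρ η] ∑_a tr[Y_{a|y}] p(y)⁻¹`. -/
def GyE {d l κ : ℕ} (Yr : Mat d) (Ym : Fin κ → Fin l → Mat d) (p : Fin κ → ℝ)
    (y : Fin κ) (η : Mat d) : ℝ :=
  betaConst Yr Ym p * (Matrix.trace (Yr * η)).re * (∑ a, (Matrix.trace (Ym y a)).re) / p y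

/-- The state `ξ_y = (∑_b p(b|y) Y_{b|y}) / (∑_b p(b|y) tr[Y_{b|y}])`. -/
def xiE {d l κ : ℕ} (Ym : Fin κ → Fin l → Mat d) (pc : Fin κ → Fin l → ℝ)
    (y : Fin κ) : Mat d :=
  ((∑ b, pc y b * (Matrix.trace (Ym y b)).re)⁻¹ : ℝ) • ∑ b, pc y b • Ym y b

/-- The exclusion game built from dual-feasible operators. -/
def exclPsi {d l κ : ℕ} (Yr : Mat d) (Ym : Fin κ → Fin l → Mat d) (p : Fin κ → ℝ)
    (pc : Fin κ → Fin l → ℝ) : Fin κ → Fin (l + 1) → (Mat d →ₗ[ℂ] Mat d) :=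
  fun y b =>
    if h : (b : ℕ) < l then
      ((betaConst Yr Ym p / p y : ℝ) : ℂ) • funMap Yr (Ym y ⟨b, h⟩)
    else
      funMap 1 (xiE Ym pc y) -
        ((betaConst Yr Ym p * (∑ a, (Matrix.trace (Ym y a)).re) / p y : ℝ) : ℂ) •
          funMap Yr (xiE Ym pc y)


lemma sum3_swap {α : Type*} [AddCommMonoid α] {n1 n2 n3 : ℕ}
    (f : Fin n1 → Fin n2 → Fin n3 → α) :
    ∑ x, ∑ a, ∑ lam, f x a lam = ∑ lam, ∑ x, ∑ a, f x a lam := by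
  have h1 : ∀ x, ∑ a, ∑ lam, f x a lam = ∑ lam, ∑ a, f x a lam := fun x =>
    Finset.sum_comm
  simp_rw [h1]
  exact Finset.sum_comm

lemma psd_real_smul {d : ℕ} {A : Mat d} (hA : A.PosSemidef) {c : ℝ} (hc : 0 ≤ c) :
    (c • A).PosSemidef := by
  have h : (c • A) = (c : ℂ) • A := by
    ext i j; simp [Complex.real_smul]
  rw [h]
  constructor
  · unfold Matrix.IsHermitian
    rw [Matrix.conjTranspose_smul, hA.1]
    congr 1
    simp [Complex.star_def, Complex.conj_ofReal]
  · intro x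
    rw [show (x.sum fun i xi => x.sum fun j xj => star xi * ((c:ℂ) • A) i j * xj) = (c:ℂ) * (x.sum fun i xi => x.sum fun j xj => star xi * A i j * xj) by
      rw [Finsupp.mul_sum]; refine Finsupp.sum_congr fun i _ => ?_
      rw [Finsupp.mul_sum]; refine Finsupp.sum_congr fun j _ => ?_
      simp only [Matrix.smul_apply, smul_eq_mul]; ring]
    exact mul_nonneg (by exact_mod_cast Complex.zero_le_real.mpr hc) (hA.2 x)

/-- compatibility is closed under simulability. -/
theorem compatible_of_simulable {d l κ m τ : ℕ}
    (M : Fin κ → Fin l → Mat d) (N : Fin τ → Fin m → Mat d)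
    (hM : IsPOVMSet M) (hN : IsPOVMSet N)
    (hcomp : Compatible M) (hsim : Simulable N M) :
    Compatible N := by
  obtain ⟨nl, G, pc, hGpos, hGsum, hpcPMF, hMeq⟩ := hcomp
  obtain ⟨nz, q, r, s, hq, hr, hs, hNeq⟩ := hsim
  refine ⟨nz * nl,
    fun i => q (finProdFinEquiv.symm i).1 • G (finProdFinEquiv.symm i).2,
    fun y i b => ∑ x, ∑ a, r y (finProdFinEquiv.symm i).1 x *
      pc x (finProdFinEquiv.symm i).2 a * s y (finProdFinEquiv.symm i).1 a b,
    ?_, ?_, ?_, ?_⟩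
  · intro i
    exact psd_real_smul (hGpos _) (hq.1 _)
  · rw [← Fintype.sum_equiv finProdFinEquiv
      (fun p : Fin nz × Fin nl => q (finProdFinEquiv.symm (finProdFinEquiv p)).1 •
        G (finProdFinEquiv.symm (finProdFinEquiv p)).2) _ (fun p => rfl)]
    simp only [Equiv.symm_apply_apply]
    rw [Fintype.sum_prod_type]
    have : ∀ z : Fin nz, ∑ lam, q z • G lam = q z • (1 : Mat d) := by
      intro z; rw [← Finset.smul_sum, hGsum]
    simp_rw [this, ← Finset.sum_smul, hq.2, one_smul]
  · intro y i
    constructor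
    · intro b
      exact Finset.sum_nonneg fun x _ => Finset.sum_nonneg fun a _ =>
        mul_nonneg (mul_nonneg ((hr y _).1 x) ((hpcPMF x _).1 a)) ((hs y _ a).1 b)
    · rw [Finset.sum_comm]
      have : ∀ x, ∑ b, ∑ a, r y (finProdFinEquiv.symm i).1 x *
          pc x (finProdFinEquiv.symm i).2 a * s y (finProdFinEquiv.symm i).1 a b
          = r y (finProdFinEquiv.symm i).1 x := by
        intro x
        rw [Finset.sum_comm]
        have : ∀ a, ∑ b, r y (finProdFinEquiv.symm i).1 x *
            pc x (finProdFinEquiv.symm i).2 a * s y (finProdFinEquiv.symm i).1 a b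
            = r y (finProdFinEquiv.symm i).1 x * pc x (finProdFinEquiv.symm i).2 a := by
          intro a
          rw [← Finset.mul_sum, (hs y _ a).2, mul_one]
        simp_rw [this, ← Finset.mul_sum, (hpcPMF x _).2, mul_one]
      simp_rw [this, (hr y _).2]
  · intro y b
    rw [hNeq y b]
    rw [← Fintype.sum_equiv finProdFinEquiv
      (fun p : Fin nz × Fin nl => (∑ x, ∑ a, r y (finProdFinEquiv.symm (finProdFinEquiv p)).1 x *
        pc x (finProdFinEquiv.symm (finProdFinEquiv p)).2 a *
        s y (finProdFinEquiv.symm (finProdFinEquiv p)).1 a b) •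
        (q (finProdFinEquiv.symm (finProdFinEquiv p)).1 •
          G (finProdFinEquiv.symm (finProdFinEquiv p)).2)) _ (fun p => rfl)]
    simp only [Equiv.symm_apply_apply]
    rw [Fintype.sum_prod_type]
    simp_rw [hMeq, Finset.smul_sum, Finset.sum_smul, smul_smul]
    refine Finset.sum_congr rfl fun z _ => ?_
    rw [sum3_swap]
    refine Finset.sum_congr rfl fun lam _ => Finset.sum_congr rfl fun x _ =>
      Finset.sum_congr rfl fun a _ => ?_
    congr 1
    ring

end MultiObject
end
end

section
/- Dual conic program for the generalised robustness of a state: let ρ be a state with R_F(ρ) < ∞. Then R_F(ρ) = sup { tr[Zρ] − 1 : Z a positive semidefinite d×d matrix with tr[Zσ] ≤ 1 for all σ ∈ F }, and the infimum defining R_F(ρ) is attained. -/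
open scoped BigOperators ComplexOrder

noncomputable section

namespace MultiObject

section RSD

open Matrix Complex Pointwise

variable {d : ℕ}

instance : LocallyConvexSpace ℝ (Mat d) :=
  inferInstanceAs (LocallyConvexSpace ℝ (Fin d → Fin d → ℂ))

instance : IsTopologicalAddGroup (Mat d) :=
  inferInstanceAs (IsTopologicalAddGroup (Fin d → Fin d → ℂ))

lemma RSD.realsmul (c : ℝ) (A : Mat d) : c • A = (c : ℂ) • A := by
  ext i j; simp [Complex.real_smul]

lemma RSD.psd_smul {Z : Mat d} (h : Z.PosSemidef) {c : ℝ} (hc : 0 ≤ c) :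
    (c • Z).PosSemidef := by
  rw [RSD.realsmul]
  constructor
  · have h1 := h.isHermitian
    rw [Matrix.IsHermitian, conjTranspose_smul, h1]
    norm_num
  · exact (h.smul (Complex.zero_le_real.2 hc)).2

lemma RSD.psd_diag {X : Mat d} (hX : X.PosSemidef) (i : Fin d) : 0 ≤ X i i := by
  exact hX.diag_nonneg

lemma RSD.herm_diag_im {X : Mat d} (hX : X.IsHermitian) (i : Fin d) : (X i i).im = 0 := by
  have h := congrArg (fun M => M i i) hX
  simp only [Matrix.conjTranspose_apply] at h
  have h2 := congrArg Complex.im h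
  simp only [RCLike.star_def, Complex.conj_im] at h2
  linarith

lemma RSD.herm_trace_im {X : Mat d} (hX : X.IsHermitian) : (Matrix.trace X).im = 0 := by
  rw [Matrix.trace, Complex.im_sum]
  exact Finset.sum_eq_zero fun i _ => RSD.herm_diag_im hX i

lemma RSD.psd_trace_re_nonneg {X : Mat d} (hX : X.PosSemidef) : 0 ≤ (Matrix.trace X).re := by
  rw [Matrix.trace, Complex.re_sum]
  refine Finset.sum_nonneg fun i _ => ?_
  exact (Complex.le_def.1 (RSD.psd_diag hX i)).1

lemma RSD.trace_mul_psd_nonneg {Z P : Mat d} (hZ : Z.PosSemidef) (hP : P.PosSemidef) :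
    0 ≤ (Matrix.trace (Z * P)).re := by
  obtain ⟨B, rfl⟩ : ∃ B : Mat d, Z = Bᴴ * B := by
    open scoped MatrixOrder in
    obtain ⟨B, hB⟩ := CStarAlgebra.nonneg_iff_eq_star_mul_self.mp hZ.nonneg
    exact ⟨B, hB⟩
  have h : Matrix.trace (Bᴴ * B * P) = Matrix.trace (B * P * Bᴴ) := by
    rw [Matrix.trace_mul_cycle (A := Bᴴ)]
    rw [Matrix.trace_mul_cycle (A := P)]
  rw [h]
  exact RSD.psd_trace_re_nonneg (hP.mul_mul_conjTranspose_same B)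

lemma RSD.dot_pair (X : Mat d) (i j : Fin d) (u w : ℂ) :
    star (Pi.single i u + Pi.single j w) ⬝ᵥ X *ᵥ (Pi.single i u + Pi.single j w)
      = starRingEnd ℂ u * X i i * u + starRingEnd ℂ u * (X i j) * w
        + starRingEnd ℂ w * X j i * u + starRingEnd ℂ w * X j j * w := by
  have hs : ∀ (k : Fin d) (c : ℂ),
      star (Pi.single k c : Fin d → ℂ) = Pi.single k (starRingEnd ℂ c) := by
    intro k c; ext l; by_cases h : l = k <;> simp [Pi.single_apply, h]
  simp only [star_add, hs, Matrix.mulVec_add, add_dotProduct, dotProduct_add,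
    Matrix.mulVec_single, single_dotProduct]
  simp [dotProduct, Pi.single_apply, Finset.sum_ite_eq', mul_comm, mul_assoc, mul_left_comm]
  ring

lemma RSD.psd_entry_norm_le {X : Mat d} (hX : X.PosSemidef) (i j : Fin d) :
    ‖X i j‖ ≤ (Matrix.trace X).re := by
  have dr_nonneg : ∀ k, 0 ≤ (X k k).re := fun k => (Complex.le_def.1 (RSD.psd_diag hX k)).1
  have dr_im : ∀ k, (X k k).im = 0 := fun k => RSD.herm_diag_im hX.isHermitian k
  have trace_eq : (Matrix.trace X).re = ∑ k, (X k k).re := by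
    rw [Matrix.trace, Complex.re_sum]; rfl
  by_cases hij : i = j
  · subst hij
    have h1 : ‖X i i‖ = (X i i).re := by
      rw [Complex.norm_def, Complex.normSq_apply, dr_im]
      simpa using Real.sqrt_mul_self (dr_nonneg i)
    rw [h1, trace_eq]
    exact Finset.single_le_sum (fun k _ => dr_nonneg k) (Finset.mem_univ i)
  · set z := X i j with hzdef
    by_cases hz0 : z = 0
    · rw [hz0]
      rw [Matrix.trace, Complex.re_sum]
      simpa using Finset.sum_nonneg fun k (_ : k ∈ Finset.univ) => dr_nonneg k
    · have hzpos : 0 < ‖z‖ := norm_pos_iff.2 hz0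
      have hcz : starRingEnd ℂ z * z = ((‖z‖:ℂ))^2 := by
        rw [mul_comm, Complex.mul_conj]
        rw [Complex.normSq_eq_norm_sq]
        push_cast; ring
      have hXji : X j i = starRingEnd ℂ z := by
        have h := congrArg (fun M => M j i) hX.isHermitian
        simp only [Matrix.conjTranspose_apply] at h
        rw [← h]; simp [hzdef]
      have key := hX.dotProduct_mulVec_nonneg (Pi.single i (-z) + Pi.single j ((‖z‖:ℂ)) : Fin d → ℂ)
      rw [RSD.dot_pair] at key
      rw [hXji] at key
      have hval : starRingEnd ℂ (-z) * X i i * (-z) + starRingEnd ℂ (-z) * z * ((‖z‖:ℂ))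
          + starRingEnd ℂ ((‖z‖:ℂ)) * (starRingEnd ℂ z) * (-z)
          + starRingEnd ℂ ((‖z‖:ℂ)) * X j j * ((‖z‖:ℂ))
          = ((‖z‖:ℂ))^2 * (X i i + X j j) - 2 * ((‖z‖:ℂ))^3 := by
        simp only [map_neg, Complex.conj_ofReal]
        linear_combination (X i i - 2*((‖z‖:ℂ))) * hcz
      rw [hval] at key
      have hre := (Complex.le_def.1 key).1
      have hre2 : 0 ≤ ‖z‖^2 * ((X i i).re + (X j j).re) - 2 * ‖z‖^3 := by
        have heq : (((‖z‖:ℂ))^2 * (X i i + X j j) - 2 * ((‖z‖:ℂ))^3).re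
            = ‖z‖^2 * ((X i i).re + (X j j).re) - 2 * ‖z‖^3 := by
          simp [Complex.sub_re, Complex.mul_re, Complex.add_re, Complex.add_im, pow_succ,
            Complex.mul_im, Complex.ofReal_re, Complex.ofReal_im]
          try ring
        rw [heq] at hre
        simpa using hre
      have h2z : 2 * ‖z‖ ≤ (X i i).re + (X j j).re := by
        nlinarith [hzpos, mul_pos hzpos hzpos, hre2]
      have hsum : (X i i).re + (X j j).re ≤ ∑ k, (X k k).re := by
        calc (X i i).re + (X j j).re = ∑ k ∈ ({i, j} : Finset (Fin d)), (X k k).re := by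
              rw [Finset.sum_insert (by simpa using hij), Finset.sum_singleton]
          _ ≤ ∑ k, (X k k).re :=
              Finset.sum_le_sum_of_subset_of_nonneg (Finset.subset_univ _)
                fun k _ _ => dr_nonneg k
      rw [trace_eq]
      nlinarith [hzpos]

lemma RSD.psd_eq_zero_of_trace {X : Mat d} (hX : X.PosSemidef)
    (h : (Matrix.trace X).re = 0) : X = 0 := by
  ext i j
  have h1 := RSD.psd_entry_norm_le hX i j
  rw [h] at h1
  simpa using norm_le_zero_iff.1 h1

lemma RSD.continuous_entry (i j : Fin d) : Continuous fun X : Mat d => X i j :=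
  (continuous_apply j).comp (continuous_apply i)

lemma RSD.continuous_quad (v : Fin d → ℂ) : Continuous fun X : Mat d => star v ⬝ᵥ X *ᵥ v := by
  have h : (fun X : Mat d => star v ⬝ᵥ X *ᵥ v) = fun X => ∑ k, star v k * ∑ l, X k l * v l := by
    funext X; simp [dotProduct, Matrix.mulVec]
  rw [h]
  exact continuous_finset_sum _ fun k _ => continuous_const.mul
    (continuous_finset_sum _ fun l _ => (RSD.continuous_entry k l).mul continuous_const)

lemma RSD.isClosed_nonnegC : IsClosed {z : ℂ | 0 ≤ z} := by
  have h : {z : ℂ | 0 ≤ z} = Complex.re ⁻¹' Set.Ici 0 ∩ Complex.im ⁻¹' {0} := by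
    ext z
    simp [Complex.le_def, eq_comm]
  rw [h]
  exact (isClosed_Ici.preimage Complex.continuous_re).inter
    (isClosed_singleton.preimage Complex.continuous_im)

lemma RSD.isClosed_psd : IsClosed {X : Mat d | X.PosSemidef} := by
  have h : {X : Mat d | X.PosSemidef}
      = {X : Mat d | Xᴴ = X} ∩ ⋂ v : Fin d → ℂ, {X : Mat d | 0 ≤ star v ⬝ᵥ X *ᵥ v} := by
    ext X
    simp only [Set.mem_setOf_eq, Set.mem_inter_iff, Set.mem_iInter]
    exact ⟨fun hX => ⟨hX.1, hX.dotProduct_mulVec_nonneg⟩,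
      fun hX => Matrix.PosSemidef.of_dotProduct_mulVec_nonneg hX.1 hX.2⟩
  rw [h]
  exact (isClosed_eq continuous_id.matrix_conjTranspose continuous_id).inter
    (isClosed_iInter fun v => RSD.isClosed_nonnegC.preimage (RSD.continuous_quad v))

lemma RSD.continuous_trace_re : Continuous fun X : Mat d => (Matrix.trace X).re :=
  Complex.continuous_re.comp (Continuous.matrix_trace continuous_id)

lemma RSD.compact_psd_le (c : ℝ) :
    IsCompact {X : Mat d | X.PosSemidef ∧ (Matrix.trace X).re ≤ c} := by
  have hball : IsCompact (Set.pi Set.univ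
      (fun _ : Fin d => Set.pi Set.univ fun _ : Fin d => Metric.closedBall (0:ℂ) c)
        : Set (Fin d → Fin d → ℂ)) :=
    isCompact_univ_pi fun _ => isCompact_univ_pi fun _ => isCompact_closedBall _ _
  have hball2 : IsCompact (Set.pi Set.univ
      (fun _ : Fin d => Set.pi Set.univ fun _ : Fin d => Metric.closedBall (0:ℂ) c)
        : Set (Mat d)) := hball
  refine IsCompact.of_isClosed_subset hball2 ?_ ?_
  · exact RSD.isClosed_psd.inter (isClosed_Iic.preimage RSD.continuous_trace_re)
  · intro X hX i _ j _
    simp only [Metric.mem_closedBall, dist_zero_right]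
    exact le_trans (RSD.psd_entry_norm_le hX.1 i j) hX.2

def RSD.Cf (f : Mat d →L[ℝ] ℝ) : Mat d := fun i j =>
  (f (Matrix.single j i 1) : ℂ) - Complex.I * (f (Matrix.single j i Complex.I))

lemma RSD.Cf_spec (f : Mat d →L[ℝ] ℝ) (A : Mat d) :
    (Matrix.trace (RSD.Cf f * A)).re = f A := by
  have hdecomp : A = ∑ p : Fin d, ∑ q : Fin d,
      ((A p q).re • Matrix.single p q (1:ℂ)
        + (A p q).im • Matrix.single p q Complex.I) := by
    conv_lhs => rw [Matrix.matrix_eq_sum_single A]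
    refine Finset.sum_congr rfl fun p _ => Finset.sum_congr rfl fun q _ => ?_
    rw [Matrix.smul_single, Matrix.smul_single, ← Matrix.single_add]
    rw [Complex.real_smul, Complex.real_smul, mul_one]
    conv_lhs => rw [← Complex.re_add_im (A p q)]
  have hrhs : f A = ∑ p : Fin d, ∑ q : Fin d,
      ((A p q).re * f (Matrix.single p q (1:ℂ))
        + (A p q).im * f (Matrix.single p q Complex.I)) := by
    conv_lhs => rw [hdecomp]
    rw [map_sum]
    refine Finset.sum_congr rfl fun p _ => ?_
    rw [map_sum]
    refine Finset.sum_congr rfl fun q _ => ?_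
    rw [map_add, _root_.map_smul, _root_.map_smul]
    simp
  have hlhs : (Matrix.trace (RSD.Cf f * A)).re = ∑ i : Fin d, ∑ j : Fin d,
      ((A j i).re * f (Matrix.single j i (1:ℂ))
        + (A j i).im * f (Matrix.single j i Complex.I)) := by
    rw [Matrix.trace, Complex.re_sum]
    refine Finset.sum_congr rfl fun i _ => ?_
    rw [Matrix.diag_apply, Matrix.mul_apply, Complex.re_sum]
    refine Finset.sum_congr rfl fun j _ => ?_
    simp [RSD.Cf, Complex.mul_re, Complex.sub_re, Complex.sub_im, Complex.mul_im]
    ring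
  rw [hlhs, hrhs]
  rw [Finset.sum_comm]

lemma RSD.vecMulVec_psd (v : Fin d → ℂ) : (Matrix.vecMulVec v (star v)).PosSemidef := by
  rw [Matrix.vecMulVec_eq (Fin 1), ← Matrix.conjTranspose_replicateCol]
  exact Matrix.posSemidef_self_mul_conjTranspose _

lemma RSD.trace_mul_vecMulVec (W : Mat d) (v : Fin d → ℂ) :
    Matrix.trace (W * Matrix.vecMulVec v (star v)) = star v ⬝ᵥ W *ᵥ v := by
  simp only [Matrix.trace, Matrix.diag_apply, Matrix.mul_apply, Matrix.vecMulVec_apply,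
    dotProduct, Matrix.mulVec, Pi.star_apply]
  refine Finset.sum_congr rfl fun i _ => ?_
  rw [Finset.mul_sum]
  refine Finset.sum_congr rfl fun k _ => ?_
  ring

lemma RSD.herm_trace_mul_re {C : Mat d} {A : Mat d} (hA : A.IsHermitian) :
    (Matrix.trace (Cᴴ * A)).re = (Matrix.trace (C * A)).re := by
  have h : Matrix.trace (Cᴴ * A) = star (Matrix.trace (C * A)) := by
    rw [← Matrix.trace_conjTranspose, Matrix.conjTranspose_mul, hA.eq, Matrix.trace_mul_comm]
  rw [h]
  simp

lemma RSD.psd_of_nonneg_form {W : Mat d} (hH : W.IsHermitian)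
    (h : ∀ P : Mat d, P.PosSemidef → 0 ≤ (Matrix.trace (W * P)).re) : W.PosSemidef := by
  refine Matrix.PosSemidef.of_dotProduct_mulVec_nonneg hH fun v => ?_
  have h1 := h _ (RSD.vecMulVec_psd v)
  rw [RSD.trace_mul_vecMulVec] at h1
  have him : (star v ⬝ᵥ W *ᵥ v).im = 0 := by
    have hc : star (star v ⬝ᵥ W *ᵥ v) = star v ⬝ᵥ W *ᵥ v := by
      have h2 : star (star v ⬝ᵥ W *ᵥ v) = star v ⬝ᵥ Wᴴ *ᵥ v := by
        simp only [dotProduct, Matrix.mulVec, star_sum, star_mul', star_star,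
          Pi.star_apply, Matrix.conjTranspose_apply, Finset.mul_sum]
        rw [Finset.sum_comm]
        refine Finset.sum_congr rfl fun i _ => Finset.sum_congr rfl fun k _ => ?_
        ring
      rw [h2, hH.eq]
    have h3 := congrArg Complex.im hc
    simp only [RCLike.star_def, Complex.conj_im] at h3
    linarith
  rw [Complex.le_def]
  exact ⟨h1, him.symm⟩

lemma RSD.trace_realsmul_mul (c : ℝ) (W A : Mat d) :
    (Matrix.trace ((c • W) * A)).re = c * (Matrix.trace (W * A)).re := by
  rw [RSD.realsmul, smul_mul_assoc, Matrix.trace_smul, smul_eq_mul]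
  simp [Complex.mul_re]

lemma RSD.trace_realsmul_re (c : ℝ) (A : Mat d) :
    (Matrix.trace (c • A)).re = c * (Matrix.trace A).re := by
  rw [RSD.realsmul, Matrix.trace_smul, smul_eq_mul]
  simp [Complex.mul_re]

lemma RSD.mem_RFSet_iff {𝓕 : Set (Mat d)} (h𝓕 : IsFreeStateCone 𝓕)
    {ρ : Mat d} (hρ : IsState ρ) (r : ℝ) :
    r ∈ RFSet (freeStates 𝓕) ρ ↔
      (0 ≤ r ∧ ∃ X, X ∈ 𝓕 ∧ (X - ρ).PosSemidef ∧ Matrix.trace X = ((1 + r : ℝ) : ℂ)) := by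
  constructor
  · rintro ⟨hr, ρG, σ, hG, hσ, heq⟩
    refine ⟨hr, (1 + r) • σ, h𝓕.2.1 σ hσ.1 (1 + r) (by linarith), ?_, ?_⟩
    · have hX : (1 + r) • σ - ρ = r • ρG := by
        rw [← heq, add_sub_cancel_left]
      rw [hX]
      exact RSD.psd_smul hG.1 hr
    · rw [Matrix.trace_smul, hσ.2]
      simp [Complex.real_smul]
  · rintro ⟨hr, X, hX𝓕, hXρ, hXtr⟩
    rcases eq_or_lt_of_le hr with hr0 | hrpos
    · -- r = 0
      have hX0 : X - ρ = 0 := by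
        apply RSD.psd_eq_zero_of_trace hXρ
        rw [Matrix.trace_sub, hXtr, hρ.2, ← hr0]
        norm_num
      have hXρ' : X = ρ := by
        rw [sub_eq_zero] at hX0; exact hX0
      refine ⟨hr, ρ, ρ, hρ, ⟨hXρ' ▸ hX𝓕, hρ.2⟩, ?_⟩
      rw [← hr0]
      norm_num
    · have hr1 : (0:ℝ) < 1 + r := by linarith
      refine ⟨hr, r⁻¹ • (X - ρ), (1 + r)⁻¹ • X,
        ⟨RSD.psd_smul hXρ (by positivity), ?_⟩,
        ⟨h𝓕.2.1 X hX𝓕 (1 + r)⁻¹ (by positivity), ?_⟩, ?_⟩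
      · rw [Matrix.trace_smul, Matrix.trace_sub, hXtr, hρ.2]
        rw [Complex.real_smul]
        push_cast
        rw [add_sub_cancel_left]
        norm_cast
        exact inv_mul_cancel₀ (ne_of_gt hrpos)
      · rw [Matrix.trace_smul, hXtr, Complex.real_smul]
        norm_cast
        exact inv_mul_cancel₀ (ne_of_gt hr1)
      · rw [smul_smul, smul_smul, mul_inv_cancel₀ (ne_of_gt hrpos),
          mul_inv_cancel₀ (ne_of_gt hr1), one_smul, one_smul]
        abel

lemma RSD.weak_dual {𝓕 : Set (Mat d)} (h𝓕 : IsFreeStateCone 𝓕)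
    {ρ : Mat d} (hρ : IsState ρ) {Z : Mat d} (hZ : Z.PosSemidef)
    (hfeas : ∀ σ ∈ freeStates 𝓕, (Matrix.trace (Z * σ)).re ≤ 1)
    {r : ℝ} (hr : r ∈ RFSet (freeStates 𝓕) ρ) :
    (Matrix.trace (Z * ρ)).re - 1 ≤ r := by
  obtain ⟨hr0, X, hX𝓕, hXρ, hXtr⟩ := (RSD.mem_RFSet_iff h𝓕 hρ r).1 hr
  have hr1 : (0:ℝ) < 1 + r := by linarith
  set σ' := (1 + r)⁻¹ • X with hσ'def
  have hσ'free : σ' ∈ freeStates 𝓕 := by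
    refine ⟨h𝓕.2.1 X hX𝓕 (1 + r)⁻¹ (by positivity), ?_⟩
    rw [hσ'def, Matrix.trace_smul, hXtr, Complex.real_smul]
    norm_cast
    exact inv_mul_cancel₀ (ne_of_gt hr1)
  have hXσ' : X = (1 + r) • σ' := by
    rw [hσ'def, smul_smul, mul_inv_cancel₀ (ne_of_gt hr1), one_smul]
  have h1 : 0 ≤ (Matrix.trace (Z * (X - ρ))).re := RSD.trace_mul_psd_nonneg hZ hXρ
  have h2 : (Matrix.trace (Z * (X - ρ))).re
      = (Matrix.trace (Z * X)).re - (Matrix.trace (Z * ρ)).re := by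
    rw [Matrix.mul_sub, Matrix.trace_sub, Complex.sub_re]
  have h3 : (Matrix.trace (Z * X)).re ≤ 1 + r := by
    rw [hXσ', RSD.realsmul, Matrix.mul_smul, Matrix.trace_smul, smul_eq_mul]
    have h4 : (((1 + r : ℝ) : ℂ) * Matrix.trace (Z * σ')).re
        = (1 + r) * (Matrix.trace (Z * σ')).re := by
      simp [Complex.mul_re]
    rw [h4]
    calc (1 + r) * (Matrix.trace (Z * σ')).re ≤ (1 + r) * 1 :=
          mul_le_mul_of_nonneg_left (hfeas σ' hσ'free) (le_of_lt hr1)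
      _ = 1 + r := mul_one _
  linarith

lemma RSD.attained {𝓕 : Set (Mat d)} (h𝓕 : IsFreeStateCone 𝓕)
    {ρ : Mat d} (hρ : IsState ρ) (hfin : (RFSet (freeStates 𝓕) ρ).Nonempty) :
    RF (freeStates 𝓕) ρ ∈ RFSet (freeStates 𝓕) ρ := by
  obtain ⟨r₀, hr₀⟩ := hfin
  obtain ⟨hr₀0, X₀, hX₀𝓕, hX₀ρ, hX₀tr⟩ := (RSD.mem_RFSet_iff h𝓕 hρ r₀).1 hr₀
  set K := {X : Mat d | X ∈ 𝓕 ∧ (X - ρ).PosSemidef ∧ (Matrix.trace X).re ≤ 1 + r₀} with hKdef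
  have hX₀K : X₀ ∈ K := ⟨hX₀𝓕, hX₀ρ, by rw [hX₀tr]; simp⟩
  have hKcl : IsClosed K := by
    have h1 : K = (𝓕 ∩ ((fun X : Mat d => X - ρ) ⁻¹' {Y : Mat d | Y.PosSemidef}))
        ∩ ((fun X : Mat d => (Matrix.trace X).re) ⁻¹' Set.Iic (1 + r₀)) := by
      ext X
      simp only [hKdef, Set.mem_setOf_eq, Set.mem_inter_iff, Set.mem_preimage, Set.mem_Iic]
      tauto
    rw [h1]
    exact ((h𝓕.2.2.2.1.inter (RSD.isClosed_psd.preimage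
      (continuous_id.sub continuous_const))).inter
      (isClosed_Iic.preimage RSD.continuous_trace_re))
  have hKcpt : IsCompact K := by
    refine IsCompact.of_isClosed_subset (RSD.compact_psd_le (1 + r₀)) hKcl ?_
    intro X hX
    exact ⟨h𝓕.1 X hX.1, hX.2.2⟩
  obtain ⟨Xs, hXsK, hXsmin⟩ := hKcpt.exists_isMinOn ⟨X₀, hX₀K⟩
    (RSD.continuous_trace_re.continuousOn)
  set rs := (Matrix.trace Xs).re - 1 with hrsdef
  have hXs1 : 1 ≤ (Matrix.trace Xs).re := by
    have h1 := RSD.psd_trace_re_nonneg hXsK.2.1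
    rw [Matrix.trace_sub, Complex.sub_re, hρ.2] at h1
    simp only [Complex.one_re] at h1
    linarith
  have hrs0 : 0 ≤ rs := by rw [hrsdef]; linarith
  have hXstr : Matrix.trace Xs = ((1 + rs : ℝ) : ℂ) := by
    have him := RSD.herm_trace_im (h𝓕.1 Xs hXsK.1).isHermitian
    apply Complex.ext
    · simp [hrsdef]
    · simp [him]
  have hrsmem : rs ∈ RFSet (freeStates 𝓕) ρ :=
    (RSD.mem_RFSet_iff h𝓕 hρ rs).2 ⟨hrs0, Xs, hXsK.1, hXsK.2.1, hXstr⟩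
  have hlb : ∀ r ∈ RFSet (freeStates 𝓕) ρ, rs ≤ r := by
    intro r hr
    obtain ⟨hr0, X, hX𝓕, hXρ, hXtr⟩ := (RSD.mem_RFSet_iff h𝓕 hρ r).1 hr
    rcases le_or_gt r r₀ with hle | hgt
    · have hXK : X ∈ K := ⟨hX𝓕, hXρ, by rw [hXtr]; simp; linarith⟩
      have := hXsmin hXK
      simp only [Set.mem_setOf_eq] at this
      rw [hXtr] at this
      simp only [Complex.ofReal_re] at this
      rw [hrsdef]; linarith [this]
    · have h1 := hXsmin hX₀K
      simp only [Set.mem_setOf_eq] at h1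
      rw [hX₀tr] at h1
      simp only [Complex.ofReal_re] at h1
      rw [hrsdef]; linarith [h1]
  have hRF : RF (freeStates 𝓕) ρ = rs := by
    apply le_antisymm
    · exact csInf_le ⟨0, fun x hx => hx.1⟩ hrsmem
    · exact le_csInf ⟨rs, hrsmem⟩ hlb
  rw [hRF]
  exact hrsmem

lemma RSD.exists_Z {𝓕 : Set (Mat d)} (h𝓕 : IsFreeStateCone 𝓕) {ρ : Mat d} (hρ : IsState ρ)
    {t : ℝ} (ht1 : 1 ≤ t) (htlt : t < 1 + RF (freeStates 𝓕) ρ) :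
    ∃ Z : Mat d, Z.PosSemidef ∧ (∀ σ ∈ freeStates 𝓕, (Matrix.trace (Z * σ)).re ≤ 1) ∧
      t < (Matrix.trace (Z * ρ)).re := by
  have h0𝓕 : (0 : Mat d) ∈ 𝓕 := by
    obtain ⟨σ₀, hσ₀⟩ := h𝓕.2.2.2.2
    have h := h𝓕.2.1 σ₀ hσ₀.1 0 le_rfl
    simpa using h
  set K' := {Y : Mat d | Y ∈ 𝓕 ∧ (Matrix.trace Y).re ≤ t} with hK'def
  set N := {P : Mat d | (-P).PosSemidef} with hNdef
  set Sset := {A : Mat d | ∃ Y P, Y ∈ K' ∧ P ∈ N ∧ A = Y + P} with hSdef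
  have hK'cl : IsClosed K' := by
    have h1 : K' = 𝓕 ∩ ((fun X : Mat d => (Matrix.trace X).re) ⁻¹' Set.Iic t) := by
      ext X; simp [hK'def]
    rw [h1]
    exact h𝓕.2.2.2.1.inter (isClosed_Iic.preimage RSD.continuous_trace_re)
  have hK'cpt : IsCompact K' := by
    refine IsCompact.of_isClosed_subset (RSD.compact_psd_le t) hK'cl ?_
    intro X hX
    exact ⟨h𝓕.1 X hX.1, hX.2⟩
  have hNcl : IsClosed N := by
    have h1 : N = (fun P : Mat d => -P) ⁻¹' {X : Mat d | X.PosSemidef} := rfl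
    rw [h1]
    exact RSD.isClosed_psd.preimage continuous_neg
  have hScl : IsClosed Sset := by
    have h : Sset = K' +ᵥ N := by
      ext A
      simp only [hSdef, Set.mem_setOf_eq, Set.mem_vadd_set]
      constructor
      · rintro ⟨Y, P, hY, hP, rfl⟩; exact ⟨Y, hY, P, hP, rfl⟩
      · rintro ⟨Y, hY, P, hP, rfl⟩; exact ⟨Y, P, hY, hP, rfl⟩
    rw [h]
    exact hNcl.vadd_left_of_isCompact hK'cpt
  have hSconv : Convex ℝ Sset := by
    rintro x ⟨Yx, Px, ⟨hYx, hYxt⟩, hPx, rfl⟩ y ⟨Yy, Py, ⟨hYy, hYyt⟩, hPy, rfl⟩ a b ha hb hab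
    refine ⟨a • Yx + b • Yy, a • Px + b • Py,
      ⟨h𝓕.2.2.1 _ (h𝓕.2.1 _ hYx a ha) _ (h𝓕.2.1 _ hYy b hb), ?_⟩, ?_, ?_⟩
    · rw [Matrix.trace_add, Complex.add_re, RSD.trace_realsmul_re, RSD.trace_realsmul_re]
      have h1 := mul_le_mul_of_nonneg_left hYxt ha
      have h2 := mul_le_mul_of_nonneg_left hYyt hb
      nlinarith
    · show (-(a • Px + b • Py)).PosSemidef
      rw [neg_add, ← smul_neg, ← smul_neg]
      exact (RSD.psd_smul hPx ha).add (RSD.psd_smul hPy hb)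
    · rw [smul_add, smul_add]
      abel
  have hρS : ρ ∉ Sset := by
    rintro ⟨Y, P, ⟨hY𝓕, hYtr⟩, hPN, heq⟩
    have hYρ : (Y - ρ).PosSemidef := by
      have h1 : Y - ρ = -P := by rw [heq]; abel
      rw [h1]
      exact hPN
    set r' := (Matrix.trace Y).re - 1 with hr'def
    have hr'0 : 0 ≤ r' := by
      have h1 := RSD.psd_trace_re_nonneg hYρ
      rw [Matrix.trace_sub, Complex.sub_re, hρ.2] at h1
      simp only [Complex.one_re] at h1
      rw [hr'def]; linarith
    have hYtr' : Matrix.trace Y = ((1 + r' : ℝ) : ℂ) := by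
      have him := RSD.herm_trace_im (h𝓕.1 Y hY𝓕).isHermitian
      apply Complex.ext
      · simp [hr'def]
      · simp [him]
    have hmem : r' ∈ RFSet (freeStates 𝓕) ρ :=
      (RSD.mem_RFSet_iff h𝓕 hρ r').2 ⟨hr'0, Y, hY𝓕, hYρ, hYtr'⟩
    have hle : RF (freeStates 𝓕) ρ ≤ r' := csInf_le ⟨0, fun x hx => hx.1⟩ hmem
    rw [hr'def] at hle
    linarith
  obtain ⟨f, u, hfS, hfρ⟩ := geometric_hahn_banach_closed_point hSconv hScl hρS
  have h0S : (0 : Mat d) ∈ Sset := by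
    refine ⟨0, 0, ⟨h0𝓕, by simp; linarith⟩, ?_, by simp⟩
    show (-(0 : Mat d)).PosSemidef
    simpa using Matrix.PosSemidef.zero
  have hu0 : 0 < u := by
    have h1 := hfS 0 h0S
    rwa [map_zero] at h1
  set W := RSD.Cf f + (RSD.Cf f)ᴴ with hWdef
  have hWh : W.IsHermitian := by
    show Wᴴ = W
    rw [hWdef, Matrix.conjTranspose_add, Matrix.conjTranspose_conjTranspose, add_comm]
  have hgW : ∀ A : Mat d, A.IsHermitian → (Matrix.trace (W * A)).re = 2 * f A := by
    intro A hA
    rw [hWdef, Matrix.add_mul, Matrix.trace_add, Complex.add_re, RSD.Cf_spec,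
      RSD.herm_trace_mul_re hA, RSD.Cf_spec]
    ring
  have hfP : ∀ P : Mat d, P.PosSemidef → 0 ≤ f P := by
    intro P hP
    by_contra hneg
    push_neg at hneg
    have hfPne : f P ≠ 0 := ne_of_lt hneg
    set s := (u + 1) / (-f P) with hsdef
    have hs : 0 ≤ s := by
      apply div_nonneg (by linarith) (by linarith)
    have hmem : -(s • P) ∈ Sset := by
      refine ⟨0, -(s • P), ⟨h0𝓕, by simp; linarith⟩, ?_, by simp⟩
      show (-(-(s • P))).PosSemidef
      rw [neg_neg]
      exact RSD.psd_smul hP hs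
    have h1 := hfS _ hmem
    rw [map_neg, _root_.map_smul] at h1
    have h2 : s * f P = -(u + 1) := by
      rw [hsdef, div_mul_eq_mul_div, div_neg, mul_div_assoc, div_self hfPne]
      ring
    simp only [smul_eq_mul] at h1
    rw [h2] at h1
    linarith
  have hWpsd : W.PosSemidef := by
    refine RSD.psd_of_nonneg_form hWh fun P hP => ?_
    rw [hgW P hP.isHermitian]
    have := hfP P hP
    linarith
  have hfσ : ∀ σ ∈ freeStates 𝓕, t * f σ < u := by
    intro σ hσ
    have hmem : t • σ ∈ Sset := by
      refine ⟨t • σ, 0, ⟨h𝓕.2.1 σ hσ.1 t (by linarith), ?_⟩, ?_, by simp⟩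
      · rw [RSD.trace_realsmul_re, hσ.2]
        simp
      · show (-(0 : Mat d)).PosSemidef
        simpa using Matrix.PosSemidef.zero
    have h1 := hfS _ hmem
    rwa [_root_.map_smul, smul_eq_mul] at h1
  have hfρu : u < f ρ := hfρ
  refine ⟨(t / (2 * u)) • W, RSD.psd_smul hWpsd (by positivity), ?_, ?_⟩
  · intro σ hσ
    rw [RSD.trace_realsmul_mul, hgW σ (h𝓕.1 σ hσ.1).isHermitian]
    have h1 := hfσ σ hσ
    have heq : t / (2 * u) * (2 * f σ) = (t * f σ) / u := by
      field_simp
    rw [heq]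
    exact le_of_lt ((div_lt_one hu0).2 h1)
  · rw [RSD.trace_realsmul_mul, hgW ρ hρ.1.isHermitian]
    have heq : t / (2 * u) * (2 * f ρ) = (t * f ρ) / u := by
      field_simp
    rw [heq]
    rw [lt_div_iff₀ hu0]
    have ht0 : 0 < t := by linarith
    nlinarith

end RSD

/-- dual conic program for the generalised robustness of a state,
together with attainment of the defining infimum. -/
theorem robustness_state_dual {d : ℕ} (hd : 1 ≤ d)
    (𝓕 : Set (Mat d)) (h𝓕 : IsFreeStateCone 𝓕)
    (ρ : Mat d) (hρ : IsState ρ)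
    (hfin : (RFSet (freeStates 𝓕) ρ).Nonempty) :
    RF (freeStates 𝓕) ρ =
      sSup {v : ℝ | ∃ Z : Mat d, Z.PosSemidef ∧
        (∀ σ ∈ freeStates 𝓕, (Matrix.trace (Z * σ)).re ≤ 1) ∧
        v = (Matrix.trace (Z * ρ)).re - 1} ∧
    RF (freeStates 𝓕) ρ ∈ RFSet (freeStates 𝓕) ρ := by
  have hmem := RSD.attained h𝓕 hρ hfin
  refine ⟨?_, hmem⟩
  set S := {v : ℝ | ∃ Z : Mat d, Z.PosSemidef ∧
      (∀ σ ∈ freeStates 𝓕, (Matrix.trace (Z * σ)).re ≤ 1) ∧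
      v = (Matrix.trace (Z * ρ)).re - 1} with hSdef
  have h0S : (0:ℝ) ∈ S := by
    refine ⟨1, Matrix.PosSemidef.one, ?_, ?_⟩
    · intro σ hσ
      rw [Matrix.one_mul, hσ.2]
      simp
    · rw [Matrix.one_mul, hρ.2]
      simp
  have hbdd : BddAbove S := by
    refine ⟨RF (freeStates 𝓕) ρ, ?_⟩
    rintro v ⟨Z, hZ, hfeas, rfl⟩
    exact RSD.weak_dual h𝓕 hρ hZ hfeas hmem
  apply le_antisymm
  · by_contra hlt
    push_neg at hlt
    have h0sup : 0 ≤ sSup S := le_csSup hbdd h0S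
    have hRF0 : 0 ≤ RF (freeStates 𝓕) ρ := hmem.1
    set t := 1 + (sSup S + RF (freeStates 𝓕) ρ)/2 with htdef
    obtain ⟨Z, hZ, hfeas, hval⟩ := RSD.exists_Z h𝓕 hρ (t := t)
      (by rw [htdef]; linarith) (by rw [htdef]; linarith)
    have hvS : (Matrix.trace (Z * ρ)).re - 1 ∈ S := ⟨Z, hZ, hfeas, rfl⟩
    have hle := le_csSup hbdd hvS
    rw [htdef] at hval
    linarith
  · refine csSup_le ⟨0, h0S⟩ ?_
    rintro v ⟨Z, hZ, hfeas, rfl⟩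
    exact RSD.weak_dual h𝓕 hρ hZ hfeas hmem


end MultiObject
end
end

section
/- Upper bound half of Result 1: for every multi-object subchannel game (p_Y, Φ_{B|Y}), every state ρ with R_F(ρ) < ∞, and every POVM set 𝕄_{A|X} with R_𝔽(𝕄_{A|X}) < ∞, one has P^D_succ(p_Y, Φ_{B|Y}, ρ, 𝕄_{A|X}) ≤ (1 + R_F(ρ)) · (1 + R_𝔽(𝕄_{A|X})) · sup_{σ ∈ F, ℕ_{A|X} ∈ 𝔽(l,κ)} P^D_succ(p_Y, Φ_{B|Y}, σ, ℕ_{A|X}). -/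
open scoped BigOperators ComplexOrder

noncomputable section

namespace MultiObject

section AuxLemmas

lemma rsmul {d : ℕ} (c : ℝ) (A : Mat d) : c • A = (c : ℂ) • A := by
  ext i j; simp [Matrix.smul_apply, Complex.real_smul]

lemma psd_smul {d : ℕ} {A : Mat d} (hA : A.PosSemidef) {c : ℝ} (hc : 0 ≤ c) :
    ((c : ℂ) • A).PosSemidef := by
  constructor
  · unfold Matrix.IsHermitian
    rw [Matrix.conjTranspose_smul, hA.1.eq, Complex.star_def, Complex.conj_ofReal]
  · exact (Matrix.PosSemidef.smul hA (show (0:ℂ) ≤ (c:ℂ) by exact_mod_cast hc)).2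

lemma psd_sum {d : ℕ} {ι : Type*} (s : Finset ι) (f : ι → Mat d)
    (h : ∀ i ∈ s, (f i).PosSemidef) : (∑ i ∈ s, f i).PosSemidef := by
  classical
  induction s using Finset.induction_on with
  | empty => simpa using Matrix.PosSemidef.zero
  | insert _ _ hnot ih =>
    rw [Finset.sum_insert hnot]
    exact (h _ (Finset.mem_insert_self _ _)).add
      (ih fun i hi => h i (Finset.mem_insert_of_mem hi))

lemma diag_re_nonneg {d : ℕ} {A : Mat d} (hA : A.PosSemidef) (i : Fin d) :
    0 ≤ (A i i).re := by
  have := hA.re_dotProduct_nonneg (Pi.single i 1)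
  simpa [dotProduct, Pi.single_apply, Finset.sum_ite_eq, Matrix.mulVec] using this

lemma trace_re_nonneg {d : ℕ} {A : Mat d} (hA : A.PosSemidef) : 0 ≤ (A.trace).re := by
  rw [Matrix.trace, Complex.re_sum]
  exact Finset.sum_nonneg fun i _ => diag_re_nonneg hA i

lemma trace_mul_re_nonneg {d : ℕ} {A B : Mat d} (hA : A.PosSemidef) (hB : B.PosSemidef) :
    0 ≤ (Matrix.trace (A * B)).re := by
  obtain ⟨C, hC⟩ : ∃ C : Mat d, B = C.conjTranspose * C := by
    open scoped MatrixOrder in exact CStarAlgebra.nonneg_iff_eq_star_mul_self.mp hB.nonneg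
  have h : A * B = A * C.conjTranspose * C := by rw [hC, Matrix.mul_assoc]
  rw [h, Matrix.trace_mul_cycle]
  exact trace_re_nonneg (hA.mul_mul_conjTranspose_same C)

lemma trace_mul_re_le {d : ℕ} {N S : Mat d} (hN1 : ((1 : Mat d) - N).PosSemidef)
    (hS : S.PosSemidef) : (Matrix.trace (N * S)).re ≤ (Matrix.trace S).re := by
  have h := trace_mul_re_nonneg hN1 hS
  rw [sub_mul, one_mul, Matrix.trace_sub, Complex.sub_re] at h
  linarith

lemma simulable_isPOVMSet {d l κ m τ : ℕ} {N : Fin τ → Fin m → Mat d}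
    {M : Fin κ → Fin l → Mat d} (hM : IsPOVMSet M) (h : Simulable N M) :
    IsPOVMSet N := by
  obtain ⟨nz, q, r, s, hq, hr, hs, hEq⟩ := h
  constructor
  · intro y b
    rw [hEq]
    refine psd_sum _ _ fun z _ => psd_sum _ _ fun x _ => psd_sum _ _ fun a _ => ?_
    rw [rsmul]
    exact psd_smul (hM.1 x a)
      (mul_nonneg (mul_nonneg (hq.1 z) ((hr y z).1 x)) ((hs y z a).1 b))
  · intro y
    calc ∑ b, N y b
        = ∑ b, ∑ z, ∑ x, ∑ a, (q z * r y z x * s y z a b) • M x a := by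
          simp only [hEq]
      _ = ∑ z, ∑ x, ∑ a, ∑ b, (q z * r y z x * s y z a b) • M x a := by
          rw [Finset.sum_comm]
          exact Finset.sum_congr rfl fun z _ => by
            rw [Finset.sum_comm]
            exact Finset.sum_congr rfl fun x _ => Finset.sum_comm
      _ = ∑ z, ∑ x, (q z * r y z x) • (1 : Mat d) := by
          refine Finset.sum_congr rfl fun z _ => Finset.sum_congr rfl fun x _ => ?_
          have hinner : ∀ a : Fin l,
              ∑ b, (q z * r y z x * s y z a b) • M x a = (q z * r y z x) • M x a := by
            intro a
            rw [← Finset.sum_smul, ← Finset.mul_sum, (hs y z a).2, mul_one]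
          simp only [hinner]
          rw [← Finset.smul_sum, hM.2 x]
      _ = ∑ z, q z • (1 : Mat d) := by
          refine Finset.sum_congr rfl fun z _ => ?_
          rw [← Finset.sum_smul, ← Finset.mul_sum, (hr y z).2, mul_one]
      _ = 1 := by rw [← Finset.sum_smul, hq.2, one_smul]

lemma gameValue_nonneg {d m τ : ℕ} {p : Fin τ → ℝ} {Φ : Fin τ → Fin m → (Mat d →ₗ[ℂ] Mat d)}
    (hp : ∀ y, 0 ≤ p y) (hΦ : ∀ y, IsInstrument (Φ y)) {η : Mat d} (hη : η.PosSemidef)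
    {N : Fin τ → Fin m → Mat d} (hN : ∀ y b, (N y b).PosSemidef) :
    0 ≤ gameValue p Φ η N :=
  Finset.sum_nonneg fun y _ => Finset.sum_nonneg fun b _ =>
    mul_nonneg (hp y) (trace_mul_re_nonneg (hN y b) (((hΦ y).1 b).1 η hη))

lemma gameValue_le_one {d m τ : ℕ} {p : Fin τ → ℝ} {Φ : Fin τ → Fin m → (Mat d →ₗ[ℂ] Mat d)}
    (hG : IsGame p Φ) {η : Mat d} (hη : IsState η) {N : Fin τ → Fin m → Mat d}
    (hN : IsPOVMSet N) : gameValue p Φ η N ≤ 1 := by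
  have key : ∀ y, ∑ b, (Matrix.trace (N y b * Φ y b η)).re ≤ 1 := by
    intro y
    have h1 : ∀ b, (Matrix.trace (N y b * Φ y b η)).re ≤ (Matrix.trace (Φ y b η)).re := by
      intro b
      have hone : (1 : Mat d) - N y b = ∑ b' ∈ Finset.univ.erase b, N y b' := by
        have h2 := hN.2 y
        rw [← Finset.add_sum_erase _ _ (Finset.mem_univ b)] at h2
        rw [← h2, add_sub_cancel_left]
      refine trace_mul_re_le ?_ (((hG.2.2 y).1 b).1 η hη.1)
      rw [hone]
      exact psd_sum _ _ fun b' _ => hN.1 y b'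
    calc ∑ b, (Matrix.trace (N y b * Φ y b η)).re
        ≤ ∑ b, (Matrix.trace (Φ y b η)).re := Finset.sum_le_sum fun b _ => h1 b
      _ = (Matrix.trace (∑ b, Φ y b η)).re := by rw [Matrix.trace_sum, Complex.re_sum]
      _ = 1 := by rw [(hG.2.2 y).2 η, hη.2, Complex.one_re]
  calc gameValue p Φ η N
      = ∑ y, p y * ∑ b, (Matrix.trace (N y b * Φ y b η)).re :=
        Finset.sum_congr rfl fun y _ => (Finset.mul_sum _ _ _).symm
    _ ≤ ∑ y, p y * 1 := Finset.sum_le_sum fun y _ =>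
        mul_le_mul_of_nonneg_left (key y) (hG.1.1 y)
    _ = 1 := by simp [hG.1.2]

lemma gameValue_state_decomp {d m τ : ℕ} {p : Fin τ → ℝ}
    {Φ : Fin τ → Fin m → (Mat d →ₗ[ℂ] Mat d)} {ρ σ ρG : Mat d} {r : ℝ}
    (h : ρ = (1 + r) • σ - r • ρG) (N : Fin τ → Fin m → Mat d) :
    gameValue p Φ ρ N = (1 + r) * gameValue p Φ σ N - r * gameValue p Φ ρG N := by
  have key : ∀ y b, (Matrix.trace (N y b * Φ y b ρ)).re
      = (1 + r) * (Matrix.trace (N y b * Φ y b σ)).re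
        - r * (Matrix.trace (N y b * Φ y b ρG)).re := by
    intro y b
    rw [h, rsmul, rsmul, map_sub, map_smul, map_smul, mul_sub, Matrix.mul_smul,
      Matrix.mul_smul, Matrix.trace_sub, Matrix.trace_smul, Matrix.trace_smul]
    simp [smul_eq_mul, Complex.sub_re, Complex.mul_re]
  unfold gameValue
  simp only [key, mul_sub, Finset.sum_sub_distrib, Finset.mul_sum, mul_left_comm]

lemma gameValue_meas_decomp {d m τ : ℕ} {p : Fin τ → ℝ}
    {Φ : Fin τ → Fin m → (Mat d →ₗ[ℂ] Mat d)} {ρ : Mat d} {t : ℝ}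
    {N Nf Ng : Fin τ → Fin m → Mat d}
    (h : ∀ y b, N y b = (1 + t) • Nf y b - t • Ng y b) :
    gameValue p Φ ρ N = (1 + t) * gameValue p Φ ρ Nf - t * gameValue p Φ ρ Ng := by
  have key : ∀ y b, (Matrix.trace (N y b * Φ y b ρ)).re
      = (1 + t) * (Matrix.trace (Nf y b * Φ y b ρ)).re
        - t * (Matrix.trace (Ng y b * Φ y b ρ)).re := by
    intro y b
    rw [h y b, rsmul, rsmul, sub_mul, smul_mul_assoc, smul_mul_assoc,
      Matrix.trace_sub, Matrix.trace_smul, Matrix.trace_smul]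
    simp [smul_eq_mul, Complex.sub_re, Complex.mul_re]
  unfold gameValue
  simp only [key, mul_sub, Finset.sum_sub_distrib, Finset.mul_sum, mul_left_comm]

lemma psucc_bddAbove {d l κ m τ : ℕ} {p : Fin τ → ℝ}
    {Φ : Fin τ → Fin m → (Mat d →ₗ[ℂ] Mat d)} (hG : IsGame p Φ) {σ : Mat d}
    (hσ : IsState σ) {Ff : Fin κ → Fin l → Mat d} (hF : IsPOVMSet Ff) :
    BddAbove {v : ℝ | ∃ N : Fin τ → Fin m → Mat d, Simulable N Ff ∧ v = gameValue p Φ σ N} := by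
  refine ⟨1, ?_⟩
  rintro v ⟨N, hsim, rfl⟩
  exact gameValue_le_one hG hσ (simulable_isPOVMSet hF hsim)

lemma psucc_le_one {d l κ m τ : ℕ} {p : Fin τ → ℝ}
    {Φ : Fin τ → Fin m → (Mat d →ₗ[ℂ] Mat d)} (hG : IsGame p Φ) {σ : Mat d}
    (hσ : IsState σ) {Ff : Fin κ → Fin l → Mat d} (hF : IsPOVMSet Ff) :
    PsuccD p Φ σ Ff ≤ 1 := by
  refine Real.sSup_le ?_ zero_le_one
  rintro v ⟨N, hsim, rfl⟩
  exact gameValue_le_one hG hσ (simulable_isPOVMSet hF hsim)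

lemma psucc_nonneg {d l κ m τ : ℕ} {p : Fin τ → ℝ}
    {Φ : Fin τ → Fin m → (Mat d →ₗ[ℂ] Mat d)} (hG : IsGame p Φ) {σ : Mat d}
    (hσ : IsState σ) {Ff : Fin κ → Fin l → Mat d} (hF : IsPOVMSet Ff) :
    0 ≤ PsuccD p Φ σ Ff := by
  rcases Set.eq_empty_or_nonempty
      {v : ℝ | ∃ N : Fin τ → Fin m → Mat d, Simulable N Ff ∧ v = gameValue p Φ σ N} with hset | hset
  · unfold PsuccD
    rw [hset, Real.sSup_empty]
  · obtain ⟨v, N, hsim, rfl⟩ := hset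
    refine le_trans ?_ (le_csSup (psucc_bddAbove hG hσ hF) ⟨N, hsim, rfl⟩)
    exact gameValue_nonneg hG.1.1 hG.2.2 hσ.1 (simulable_isPOVMSet hF hsim).1

lemma aux_inf {s : Set ℝ} (hne : s.Nonempty) {v C : ℝ}
    (hC : 0 ≤ C) (h : ∀ r ∈ s, v ≤ (1 + r) * C) : v ≤ (1 + sInf s) * C := by
  refine le_of_forall_pos_le_add fun δ hδ => ?_
  obtain ⟨r, hrs, hrlt⟩ := Real.lt_sInf_add_pos hne (show (0:ℝ) < δ / (C + 1) by positivity)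
  have h2 : (1 + r) * C ≤ (1 + sInf s + δ / (C + 1)) * C :=
    mul_le_mul_of_nonneg_right (by linarith) hC
  have expand : (1 + sInf s + δ / (C + 1)) * C = (1 + sInf s) * C + (δ / (C + 1)) * C := by
    ring
  have h3 : (δ / (C + 1)) * C ≤ δ := by
    rw [div_mul_eq_mul_div, div_le_iff₀ (by linarith)]
    nlinarith
  linarith [h r hrs]

end AuxLemmas

/-- upper bound half of Result 1. -/
theorem result1_upper_bound {d l κ m τ : ℕ}
    (𝓕 : Set (Mat d)) (h𝓕 : IsFreeStateCone 𝓕)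
    (𝔽 : ∀ l κ : ℕ, Set (Fin κ → Fin l → Mat d))
    (h𝔽 : ∀ l κ : ℕ, GoodPOVMFree (𝔽 l κ))
    (h𝔽sim : ClosedUnderSim 𝔽) (h𝔽ne : (𝔽 l κ).Nonempty)
    (p : Fin τ → ℝ) (Φ : Fin τ → Fin m → (Mat d →ₗ[ℂ] Mat d)) (hG : IsGame p Φ)
    (ρ : Mat d) (hρ : IsState ρ) (M : Fin κ → Fin l → Mat d) (hM : IsPOVMSet M)
    (hrρ : (RFSet (freeStates 𝓕) ρ).Nonempty)
    (hrM : (RFMSet (𝔽 l κ) M).Nonempty) :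
    PsuccD p Φ ρ M ≤
      (1 + RF (freeStates 𝓕) ρ) * (1 + RFM (𝔽 l κ) M) *
        Dbest p Φ (freeStates 𝓕) (𝔽 l κ) := by
  -- notation
  set F : Set (Mat d) := freeStates 𝓕 with hF
  set D : ℝ := Dbest p Φ F (𝔽 l κ) with hD
  -- basic nonnegativity facts
  have hRF0 : 0 ≤ RF F ρ := Real.sInf_nonneg fun r hr => hr.1
  have hRFM0 : 0 ≤ RFM (𝔽 l κ) M := Real.sInf_nonneg fun t ht => ht.1
  -- Dbest is bounded above by 1
  have hDbdd : BddAbove {v : ℝ | ∃ (σ : Mat d) (Nn : Fin κ → Fin l → Mat d),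
      σ ∈ F ∧ Nn ∈ 𝔽 l κ ∧ v = PsuccD p Φ σ Nn} := by
    refine ⟨1, ?_⟩
    rintro v ⟨σ, Nn, hσ, hNn, rfl⟩
    exact psucc_le_one hG ⟨h𝓕.1 σ hσ.1, hσ.2⟩ ((h𝔽 l κ).1 Nn hNn)
  -- Dbest is nonnegative
  have hD0 : 0 ≤ D := by
    obtain ⟨σ0, hσ0⟩ := h𝓕.2.2.2.2
    obtain ⟨Ff0, hFf0⟩ := h𝔽ne
    refine le_trans (psucc_nonneg hG ⟨h𝓕.1 σ0 hσ0.1, hσ0.2⟩ ((h𝔽 l κ).1 Ff0 hFf0))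
      (le_csSup hDbdd ⟨σ0, Ff0, hσ0, hFf0, rfl⟩)
  -- the right-hand side is nonnegative
  have hRHS : 0 ≤ (1 + RF F ρ) * (1 + RFM (𝔽 l κ) M) * D :=
    mul_nonneg (mul_nonneg (by linarith) (by linarith)) hD0
  refine Real.sSup_le ?_ hRHS
  rintro v ⟨N, ⟨nz, q, rr, ss, hq, hrr, hss, hNeq⟩, rfl⟩
  -- key estimate for feasible robustness values r and t
  have key : ∀ r ∈ RFSet F ρ, ∀ t ∈ RFMSet (𝔽 l κ) M,
      gameValue p Φ ρ N ≤ (1 + r) * ((1 + t) * D) := by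
    rintro r ⟨hr0, ρG, σ, hρG, hσF, heq⟩ t ⟨ht0, G, Ff, hGp, hFf, heqM⟩
    have hFfPOVM : IsPOVMSet Ff := (h𝔽 l κ).1 Ff hFf
    have hσstate : IsState σ := ⟨h𝓕.1 σ hσF.1, hσF.2⟩
    set Nf : Fin τ → Fin m → Mat d :=
      fun y b => ∑ z, ∑ x, ∑ a, (q z * rr y z x * ss y z a b) • Ff x a with hNf
    set Ng : Fin τ → Fin m → Mat d :=
      fun y b => ∑ z, ∑ x, ∑ a, (q z * rr y z x * ss y z a b) • G x a with hNg
    have hc : ∀ (y : Fin τ) (z : Fin nz) (x : Fin κ) (a : Fin l) (b : Fin m),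
        0 ≤ q z * rr y z x * ss y z a b := fun y z x a b =>
      mul_nonneg (mul_nonneg (hq.1 z) ((hrr y z).1 x)) ((hss y z a).1 b)
    have hNfPSD : ∀ y b, (Nf y b).PosSemidef := by
      intro y b
      refine psd_sum _ _ fun z _ => psd_sum _ _ fun x _ => psd_sum _ _ fun a _ => ?_
      rw [rsmul]
      exact psd_smul (hFfPOVM.1 x a) (hc y z x a b)
    have hNgPSD : ∀ y b, (Ng y b).PosSemidef := by
      intro y b
      refine psd_sum _ _ fun z _ => psd_sum _ _ fun x _ => psd_sum _ _ fun a _ => ?_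
      rw [rsmul]
      exact psd_smul (hGp.1 x a) (hc y z x a b)
    have hsimNf : Simulable Nf Ff := ⟨nz, q, rr, ss, hq, hrr, hss, fun y b => rfl⟩
    -- decomposition of N
    have hMdec : ∀ x a, M x a = (1 + t) • Ff x a - t • G x a :=
      fun x a => eq_sub_of_add_eq (heqM x a)
    have hNdec : ∀ y b, N y b = (1 + t) • Nf y b - t • Ng y b := by
      intro y b
      have hterm : ∀ (z : Fin nz) (x : Fin κ) (a : Fin l),
          (q z * rr y z x * ss y z a b) • M x a
            = (1 + t) • ((q z * rr y z x * ss y z a b) • Ff x a)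
              - t • ((q z * rr y z x * ss y z a b) • G x a) := by
        intro z x a
        rw [hMdec x a, smul_sub, smul_comm _ (1 + t), smul_comm _ t]
      rw [hNeq y b]
      simp only [hterm, Finset.sum_sub_distrib, ← Finset.smul_sum]
      rfl
    have hρdec : ρ = (1 + r) • σ - r • ρG := eq_sub_of_add_eq heq
    -- game value decompositions
    have e1 := gameValue_meas_decomp (p := p) (Φ := Φ) (ρ := ρ) hNdec
    have e2 := gameValue_state_decomp (p := p) (Φ := Φ) hρdec Nf
    have hg1 : 0 ≤ gameValue p Φ ρ Ng :=
      gameValue_nonneg hG.1.1 hG.2.2 hρ.1 hNgPSD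
    have hg2 : 0 ≤ gameValue p Φ ρG Nf :=
      gameValue_nonneg hG.1.1 hG.2.2 hρG.1 hNfPSD
    have hσD : gameValue p Φ σ Nf ≤ D := by
      refine le_trans (le_csSup (psucc_bddAbove hG hσstate hFfPOVM) ⟨Nf, hsimNf, rfl⟩) ?_
      exact le_csSup hDbdd ⟨σ, Ff, hσF, hFf, rfl⟩
    calc gameValue p Φ ρ N
        = (1 + t) * gameValue p Φ ρ Nf - t * gameValue p Φ ρ Ng := e1
      _ ≤ (1 + t) * gameValue p Φ ρ Nf := by nlinarith [mul_nonneg ht0 hg1]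
      _ = (1 + t) * ((1 + r) * gameValue p Φ σ Nf - r * gameValue p Φ ρG Nf) := by rw [e2]
      _ ≤ (1 + t) * ((1 + r) * gameValue p Φ σ Nf) := by
          refine mul_le_mul_of_nonneg_left ?_ (by linarith)
          nlinarith [mul_nonneg hr0 hg2]
      _ ≤ (1 + t) * ((1 + r) * D) :=
          mul_le_mul_of_nonneg_left
            (mul_le_mul_of_nonneg_left hσD (by linarith)) (by linarith)
      _ = (1 + r) * ((1 + t) * D) := by ring
  -- take infima over r and t
  have step1 : ∀ r ∈ RFSet F ρ,
      gameValue p Φ ρ N ≤ (1 + r) * ((1 + RFM (𝔽 l κ) M) * D) := by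
    intro r hr
    have h1 : ∀ t ∈ RFMSet (𝔽 l κ) M,
        gameValue p Φ ρ N ≤ (1 + t) * ((1 + r) * D) := by
      intro t ht
      calc gameValue p Φ ρ N ≤ (1 + r) * ((1 + t) * D) := key r hr t ht
        _ = (1 + t) * ((1 + r) * D) := by ring
    have h2 := aux_inf hrM (mul_nonneg (by linarith [hr.1]) hD0) h1
    calc gameValue p Φ ρ N ≤ (1 + sInf (RFMSet (𝔽 l κ) M)) * ((1 + r) * D) := h2
      _ = (1 + r) * ((1 + RFM (𝔽 l κ) M) * D) := by rw [RFM]; ring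
  have final := aux_inf hrρ (mul_nonneg (by linarith) hD0) step1
  calc gameValue p Φ ρ N ≤ (1 + sInf (RFSet F ρ)) * ((1 + RFM (𝔽 l κ) M) * D) := final
    _ = (1 + RF F ρ) * (1 + RFM (𝔽 l κ) M) * D := by rw [RF]; ring


end MultiObject
end
end
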